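/- arXiv:2112.04290 — 7 statements merged into one kernel-verified Lean document; each statement's English description precedes it below -/
import Mathlib

section
/- Let $K \subseteq \mathbb{R}^n$ be a convex body with positive Lebesgue volume, and let $K'$ be a convex body. If for some positive integer $k$, $K'$ contains all points of $K \cap (k^{-1}\mathbb{Z})^n$, then $K'$ contains the inner parallel body $K^{\delta} = \{x \in K : \mathrm{dist}(x, \partial K) \geq \delta\}$ with $\delta = \sqrt{n}\, k^{-1}$. -/
/-!
A point `x` of `K` lies in the convex hull of the `2ⁿ` vertices of the cell of the grid
`(k⁻¹ℤ)ⁿ` containing it, all of which are within distance `√n / k` of `x`. If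
`dist(x, ∂K) ≥ √n / k`, these vertices lie in `K` (a segment leaving `K` must cross `∂K`), hence
in `K'` by hypothesis, and so `x ∈ K'` by convexity of `K'`.
-/

open MeasureTheory Metric Set

theorem ball_infDist_frontier_subset_interior {E : Type*} [NormedAddCommGroup E]
    [NormedSpace ℝ E] {K : Set E} {x : E} (hx : x ∈ K) :
    ball x (infDist x (frontier K)) ⊆ interior K := by
  -- The ball is connected and misses `frontier K = closure K \ interior K`.
  have hball : ball x (infDist x (frontier K)) ⊆ interior K ∪ (closure K)ᶜ := by
    intro y hy
    by_contra hyK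
    have hyf : y ∈ frontier K := ⟨not_not.1 (not_or.1 hyK).2, (not_or.1 hyK).1⟩
    exact (mem_ball'.1 hy).not_ge (infDist_le_dist_of_mem hyf)
  intro y hy
  have hx_int : x ∈ interior K :=
    (hball (mem_ball_self (pos_of_mem_ball hy))).resolve_right (not_not.2 (subset_closure hx))
  refine (convex_ball x _).isPreconnected.subset_left_of_subset_union isOpen_interior
    isClosed_closure.isOpen_compl (disjoint_compl_right_iff_subset.2 interior_subset_closure)
    hball ⟨x, mem_ball_self (pos_of_mem_ball hy), hx_int⟩ hy

theorem closedBall_infDist_frontier_subset {E : Type*} [NormedAddCommGroup E]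
    [NormedSpace ℝ E] {K : Set E} (hK : IsClosed K) {x : E} (hx : x ∈ K) :
    closedBall x (infDist x (frontier K)) ⊆ K := by
  rcases eq_or_ne (infDist x (frontier K)) 0 with h₀ | h₀
  · rwa [h₀, closedBall_zero, singleton_subset_iff]
  · rw [← closure_ball x h₀]
    exact closure_minimal ((ball_infDist_frontier_subset_interior hx).trans interior_subset) hK

theorem EuclideanSpace.dist_le_sqrt_card_mul {ι : Type*} [Fintype ι]
    {x y : EuclideanSpace ℝ ι} {h : ℝ} (hh : 0 ≤ h) (hxy : ∀ i, |x i - y i| ≤ h) :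
    dist x y ≤ √(Fintype.card ι) * h := by
  calc dist x y = √(∑ i, dist (x i) (y i) ^ 2) := EuclideanSpace.dist_eq x y
    _ ≤ √(∑ _i : ι, h ^ 2) := by
      gcongr with i
      exact hxy i
    _ = √(Fintype.card ι) * h := by
      rw [Finset.sum_const, Finset.card_univ, nsmul_eq_mul, Real.sqrt_mul (Nat.cast_nonneg _),
        Real.sqrt_sq hh]

theorem EuclideanSpace.mem_convexHull_vertices {ι : Type*} [Fintype ι]
    {a b x : EuclideanSpace ℝ ι} (hx : ∀ i, x i ∈ Icc (a i) (b i)) :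
    x ∈ convexHull ℝ {y | ∀ i, y i = a i ∨ y i = b i} := by
  set f := (WithLp.linearEquiv 2 ℝ (ι → ℝ)).symm.toLinearMap
  have hvert : {y : EuclideanSpace ℝ ι | ∀ i, y i = a i ∨ y i = b i} =
      f '' univ.pi fun i => {a i, b i} := by
    ext y
    exact ⟨fun hy => ⟨WithLp.ofLp y, fun i _ => hy i, rfl⟩,
      by rintro ⟨z, hz, rfl⟩ i; exact hz i trivial⟩
  rw [hvert, ← LinearMap.image_convexHull, convexHull_pi]
  refine ⟨WithLp.ofLp x, fun i _ => ?_, rfl⟩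
  dsimp only
  rw [convexHull_pair, segment_eq_Icc ((hx i).1.trans (hx i).2)]
  exact hx i

theorem EuclideanSpace.mem_convexHull_lattice_points {ι : Type*} [Fintype ι] {h : ℝ}
    (hh : 0 < h) (x : EuclideanSpace ℝ ι) :
    x ∈ convexHull ℝ
      {y | (∀ i, ∃ m : ℤ, y i = m * h) ∧ dist x y ≤ √(Fintype.card ι) * h} := by
  set a : EuclideanSpace ℝ ι := WithLp.toLp 2 fun i => ⌊x i / h⌋ * h
  set b : EuclideanSpace ℝ ι := WithLp.toLp 2 fun i => (⌊x i / h⌋ + 1) * h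
  have hab : ∀ i, x i ∈ Icc (a i) (b i) := fun i =>
    ⟨(le_div_iff₀ hh).1 (Int.floor_le _), ((div_le_iff₀ hh).1 (Int.lt_floor_add_one _).le)⟩
  refine convexHull_mono ?_ (mem_convexHull_vertices hab)
  intro y hy
  refine ⟨fun i => ?_, dist_le_sqrt_card_mul hh.le fun i => ?_⟩
  · rcases hy i with hyi | hyi
    · exact ⟨_, hyi⟩
    · exact ⟨⌊x i / h⌋ + 1, by simpa [b] using hyi⟩
  · obtain ⟨hax, hxb⟩ := hab i
    have hba : b i = a i + h := by simp only [a, b]; ring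
    rw [abs_sub_le_iff]
    rcases hy i with hyi | hyi <;> constructor <;> linarith

theorem stmt1_general {n : ℕ} (k : ℕ) (hk : 0 < k)
    (K K' : Set (EuclideanSpace ℝ (Fin n)))
    (hKc : IsCompact K)
    (hK'conv : Convex ℝ K')
    (hlat : ∀ x ∈ K, (∀ i : Fin n, ∃ m : ℤ, x i = (m : ℝ) / (k : ℝ)) → x ∈ K') :
    {x ∈ K | Real.sqrt n / (k : ℝ) ≤ infDist x (frontier K)} ⊆ K' := by
  rintro x ⟨hxK, hxd⟩
  refine convexHull_min ?_ hK'conv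
    (EuclideanSpace.mem_convexHull_lattice_points (inv_pos.2 (Nat.cast_pos.2 hk)) x)
  rintro y ⟨hy_lattice, hy_near⟩
  rw [Fintype.card_fin, ← div_eq_mul_inv] at hy_near
  refine hlat y (closedBall_infDist_frontier_subset hKc.isClosed hxK ?_) fun i => ?_
  · exact mem_closedBall'.2 (hy_near.trans hxd)
  · simpa only [div_eq_mul_inv] using hy_lattice i

theorem stmt1 {n : ℕ} (k : ℕ) (hk : 0 < k)
    (K K' : Set (EuclideanSpace ℝ (Fin n)))
    (hKne : K.Nonempty) (hKc : IsCompact K) (hKconv : Convex ℝ K)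
    (hKvol : 0 < volume K)
    (hK'ne : K'.Nonempty) (hK'c : IsCompact K') (hK'conv : Convex ℝ K')
    (hlat : ∀ x ∈ K, (∀ i : Fin n, ∃ m : ℤ, x i = (m : ℝ) / (k : ℝ)) → x ∈ K') :
    {x ∈ K | Real.sqrt n / (k : ℝ) ≤ infDist x (frontier K)} ⊆ K' :=
  stmt1_general k hk K K' hKc hK'conv hlat
end

section
/- With $d$ the pseudo-metric on graded linear subspaces defined by $d(W,W') = \limsup_{k\to\infty} k^{-n}(\dim W_k + \dim W'_k - 2\dim(W_k \cap W'_k))$, for any three graded linear subspaces $W, W', W''$ one has $d(W \cap W'', W' \cap W'') \leq d(W, W')$, where $(W \cap W'')_k := W_k \cap W''_k$. -/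
open Filter

/-- The pseudo-distance between two graded linear subspaces, intersection form:
`d(W,W') = limsup_k k⁻ⁿ (dim W_k + dim W'_k - 2 dim(W_k ∩ W'_k))`. -/
noncomputable def gradedDist {𝕜 : Type*} [Field 𝕜] {V : ℕ → Type*}
    [∀ k, AddCommGroup (V k)] [∀ k, Module 𝕜 (V k)] [∀ k, FiniteDimensional 𝕜 (V k)]
    (n : ℕ) (W W' : ∀ k, Submodule 𝕜 (V k)) : ℝ :=
  limsup (fun k : ℕ =>
    ((Module.finrank 𝕜 (W k) : ℝ) + Module.finrank 𝕜 (W' k)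
      - 2 * Module.finrank 𝕜 (W k ⊓ W' k : Submodule 𝕜 (V k))) / (k : ℝ) ^ n) atTop

/-- Submodular step: `dim(A⊓C) + dim(A⊓B) ≤ dim A + dim(A⊓B⊓C)`. -/
lemma aux_step {𝕜 : Type*} [Field 𝕜] {V : Type*} [AddCommGroup V] [Module 𝕜 V]
    [FiniteDimensional 𝕜 V] (A B C : Submodule 𝕜 V) :
    Module.finrank 𝕜 (A ⊓ C : Submodule 𝕜 V) + Module.finrank 𝕜 (A ⊓ B : Submodule 𝕜 V)
      ≤ Module.finrank 𝕜 A + Module.finrank 𝕜 ((A ⊓ B) ⊓ C : Submodule 𝕜 V) := by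
  have h := Submodule.finrank_sup_add_finrank_inf_eq (A ⊓ C) (A ⊓ B)
  have h1 : Module.finrank 𝕜 ((A ⊓ C) ⊔ (A ⊓ B) : Submodule 𝕜 V) ≤ Module.finrank 𝕜 A :=
    Submodule.finrank_mono (sup_le inf_le_left inf_le_left)
  have h2 : (A ⊓ C) ⊓ (A ⊓ B) = (A ⊓ B) ⊓ C := by
    ext x; simp only [Submodule.mem_inf]; tauto
  rw [h2] at h
  omega

theorem stmt4 {𝕜 : Type*} [Field 𝕜] {V : ℕ → Type*}
    [∀ k, AddCommGroup (V k)] [∀ k, Module 𝕜 (V k)] [∀ k, FiniteDimensional 𝕜 (V k)]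
    (n : ℕ) (hn : 1 ≤ n)
    (hbdd : ∃ C : ℝ, ∀ k : ℕ, 1 ≤ k → (Module.finrank 𝕜 (V k) : ℝ) ≤ C * (k : ℝ) ^ n)
    (W W' W'' : ∀ k, Submodule 𝕜 (V k)) :
    gradedDist n (fun k => W k ⊓ W'' k) (fun k => W' k ⊓ W'' k) ≤ gradedDist n W W' := by
  obtain ⟨C, hC⟩ := hbdd
  set f := fun k : ℕ =>
    ((Module.finrank 𝕜 (W k ⊓ W'' k : Submodule 𝕜 (V k)) : ℝ)
      + Module.finrank 𝕜 (W' k ⊓ W'' k : Submodule 𝕜 (V k))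
      - 2 * Module.finrank 𝕜 ((W k ⊓ W'' k) ⊓ (W' k ⊓ W'' k) : Submodule 𝕜 (V k)))
      / (k : ℝ) ^ n with hf
  set g := fun k : ℕ =>
    ((Module.finrank 𝕜 (W k) : ℝ) + Module.finrank 𝕜 (W' k)
      - 2 * Module.finrank 𝕜 (W k ⊓ W' k : Submodule 𝕜 (V k))) / (k : ℝ) ^ n with hg
  -- numerator inequality, in ℕ form
  have key : ∀ k : ℕ,
      Module.finrank 𝕜 (W k ⊓ W'' k : Submodule 𝕜 (V k))
        + Module.finrank 𝕜 (W' k ⊓ W'' k : Submodule 𝕜 (V k))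
        + 2 * Module.finrank 𝕜 (W k ⊓ W' k : Submodule 𝕜 (V k))
      ≤ Module.finrank 𝕜 (W k) + Module.finrank 𝕜 (W' k)
        + 2 * Module.finrank 𝕜 ((W k ⊓ W'' k) ⊓ (W' k ⊓ W'' k) : Submodule 𝕜 (V k)) := by
    intro k
    have e : (W k ⊓ W'' k) ⊓ (W' k ⊓ W'' k) = (W k ⊓ W' k) ⊓ W'' k := by
      ext x; simp only [Submodule.mem_inf]; tauto
    rw [e]
    have h1 := aux_step (W k) (W' k) (W'' k)
    have h2 := aux_step (W' k) (W k) (W'' k)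
    have e2 : (W' k ⊓ W k) ⊓ W'' k = (W k ⊓ W' k) ⊓ W'' k := by
      ext x; simp only [Submodule.mem_inf]; tauto
    have e3 : (W' k ⊓ W k) = (W k ⊓ W' k) := inf_comm _ _
    rw [e2, e3] at h2
    omega
  have hfg : ∀ k : ℕ, f k ≤ g k := by
    intro k
    rcases Nat.eq_zero_or_pos k with hk | hk
    · subst hk
      simp [hf, hg, zero_pow (Nat.one_le_iff_ne_zero.mp hn)]
    · have hpos : (0 : ℝ) < (k : ℝ) ^ n := by positivity
      apply div_le_div_of_nonneg_right ?_ hpos.le |>.trans_eq rfl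
      have := key k
      have : ((Module.finrank 𝕜 (W k ⊓ W'' k : Submodule 𝕜 (V k)) : ℝ)
          + Module.finrank 𝕜 (W' k ⊓ W'' k : Submodule 𝕜 (V k))
          + 2 * Module.finrank 𝕜 (W k ⊓ W' k : Submodule 𝕜 (V k)))
          ≤ (Module.finrank 𝕜 (W k) : ℝ) + Module.finrank 𝕜 (W' k)
          + 2 * Module.finrank 𝕜 ((W k ⊓ W'' k) ⊓ (W' k ⊓ W'' k) : Submodule 𝕜 (V k)) := by
        exact_mod_cast this
      linarith
  have hf0 : ∀ k : ℕ, 0 ≤ f k := by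
    intro k
    apply div_nonneg _ (by positivity)
    have h1 : Module.finrank 𝕜 ((W k ⊓ W'' k) ⊓ (W' k ⊓ W'' k) : Submodule 𝕜 (V k))
        ≤ Module.finrank 𝕜 (W k ⊓ W'' k : Submodule 𝕜 (V k)) :=
      Submodule.finrank_mono inf_le_left
    have h2 : Module.finrank 𝕜 ((W k ⊓ W'' k) ⊓ (W' k ⊓ W'' k) : Submodule 𝕜 (V k))
        ≤ Module.finrank 𝕜 (W' k ⊓ W'' k : Submodule 𝕜 (V k)) :=
      Submodule.finrank_mono inf_le_right
    have h1' : (Module.finrank 𝕜 ((W k ⊓ W'' k) ⊓ (W' k ⊓ W'' k) : Submodule 𝕜 (V k)) : ℝ)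
        ≤ Module.finrank 𝕜 (W k ⊓ W'' k : Submodule 𝕜 (V k)) := by exact_mod_cast h1
    have h2' : (Module.finrank 𝕜 ((W k ⊓ W'' k) ⊓ (W' k ⊓ W'' k) : Submodule 𝕜 (V k)) : ℝ)
        ≤ Module.finrank 𝕜 (W' k ⊓ W'' k : Submodule 𝕜 (V k)) := by exact_mod_cast h2
    linarith
  have hgbd : ∀ k : ℕ, 1 ≤ k → g k ≤ 2 * C := by
    intro k hk
    have hpos : (0 : ℝ) < (k : ℝ) ^ n := by
      have : (1 : ℝ) ≤ (k : ℝ) := by exact_mod_cast hk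
      positivity
    rw [hg, div_le_iff₀ hpos]
    have hW : (Module.finrank 𝕜 (W k) : ℝ) ≤ C * (k : ℝ) ^ n :=
      le_trans (by exact_mod_cast Submodule.finrank_le (W k)) (hC k hk)
    have hW' : (Module.finrank 𝕜 (W' k) : ℝ) ≤ C * (k : ℝ) ^ n :=
      le_trans (by exact_mod_cast Submodule.finrank_le (W' k)) (hC k hk)
    have hI : (0 : ℝ) ≤ (Module.finrank 𝕜 (W k ⊓ W' k : Submodule 𝕜 (V k)) : ℝ) := by positivity
    nlinarith
  have hcob : IsCoboundedUnder (· ≤ ·) atTop f :=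
    IsBoundedUnder.isCoboundedUnder_le ⟨0, eventually_map.mpr (Eventually.of_forall hf0)⟩
  have hbd : IsBoundedUnder (· ≤ ·) atTop g :=
    isBoundedUnder_of_eventually_le (a := 2 * C)
      ((eventually_ge_atTop 1).mono fun k hk => hgbd k hk)
  exact limsup_le_limsup (Eventually.of_forall hfg) hcob hbd
end

section
/- Let $W^i$, $W'^i$ be sequences of graded linear subspaces such that: (1) $W^i$ is increasing in $i$ and $W'^i$ is decreasing in $i$ (degree-wise inclusion); (2) $W^i \subseteq W'^i$ for all $i$; (3) $d(W^i, W'^i) \to 0$ as $i \to \infty$. Then $d(\sum_j W^j, \bigcap_j W'^j) = 0$, and moreover $W^i \to \sum_j W^j$ and $W'^i \to \bigcap_j W'^j$ in the pseudo-metric $d$. -/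
set_option maxHeartbeats 1000000

open Filter

section aux
open Module
variable {𝕜 : Type*} [Field 𝕜] {V : ℕ → Type*}
    [∀ k, AddCommGroup (V k)] [∀ k, Module 𝕜 (V k)] [∀ k, FiniteDimensional 𝕜 (V k)]
    {n : ℕ}

lemma gd_nested (A B : ∀ k, Submodule 𝕜 (V k)) (h : ∀ k, A k ≤ B k) :
    gradedDist n A B = limsup (fun k : ℕ =>
      ((finrank 𝕜 (B k) : ℝ) - finrank 𝕜 (A k)) / (k : ℝ) ^ n) atTop := by
  unfold gradedDist
  congr 1; funext k
  have : A k ⊓ B k = A k := inf_eq_left.mpr (h k)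
  rw [this]; ring_nf

lemma gd_symm (A B : ∀ k, Submodule 𝕜 (V k)) :
    gradedDist n A B = gradedDist n B A := by
  unfold gradedDist
  congr 1; funext k
  rw [inf_comm (A k) (B k)]; ring_nf

lemma g_bounds (hn : 1 ≤ n) {C : ℝ}
    (hC : ∀ k : ℕ, 1 ≤ k → (finrank 𝕜 (V k) : ℝ) ≤ C * (k : ℝ) ^ n)
    (A B : ∀ k, Submodule 𝕜 (V k)) (hAB : ∀ k, A k ≤ B k) (k : ℕ) :
    0 ≤ ((finrank 𝕜 (B k) : ℝ) - finrank 𝕜 (A k)) / (k : ℝ) ^ n ∧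
    ((finrank 𝕜 (B k) : ℝ) - finrank 𝕜 (A k)) / (k : ℝ) ^ n ≤ max C 0 := by
  rcases Nat.eq_zero_or_pos k with hk | hk
  · subst hk
    simp [zero_pow (by omega : n ≠ 0), le_max_iff]
  · have hkpos : (0 : ℝ) < (k : ℝ) ^ n := by positivity
    have hmono : (finrank 𝕜 (A k) : ℝ) ≤ finrank 𝕜 (B k) :=
      Nat.cast_le.mpr (Submodule.finrank_mono (hAB k))
    constructor
    · exact div_nonneg (by linarith) hkpos.le
    · rw [div_le_iff₀ hkpos]
      have h1 : (finrank 𝕜 (B k) : ℝ) ≤ finrank 𝕜 (V k) :=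
        Nat.cast_le.mpr (Submodule.finrank_le (B k))
      have h2 : (finrank 𝕜 (V k) : ℝ) ≤ C * (k : ℝ) ^ n := hC k hk
      have h3 : C * (k : ℝ) ^ n ≤ max C 0 * (k : ℝ) ^ n :=
        mul_le_mul_of_nonneg_right (le_max_left _ _) hkpos.le
      have h0 : (0 : ℝ) ≤ finrank 𝕜 (A k) := Nat.cast_nonneg _
      linarith

lemma gd_nonneg (hn : 1 ≤ n) {C : ℝ}
    (hC : ∀ k : ℕ, 1 ≤ k → (finrank 𝕜 (V k) : ℝ) ≤ C * (k : ℝ) ^ n)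
    (A B : ∀ k, Submodule 𝕜 (V k)) (hAB : ∀ k, A k ≤ B k) :
    0 ≤ gradedDist n A B := by
  rw [gd_nested A B hAB]
  exact le_limsup_of_frequently_le
    (Frequently.of_forall fun k => (g_bounds hn hC A B hAB k).1)
    (isBoundedUnder_of ⟨max C 0, fun k => (g_bounds hn hC A B hAB k).2⟩)

lemma gd_mono (hn : 1 ≤ n) {C : ℝ}
    (hC : ∀ k : ℕ, 1 ≤ k → (finrank 𝕜 (V k) : ℝ) ≤ C * (k : ℝ) ^ n)
    (A A' B' B : ∀ k, Submodule 𝕜 (V k))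
    (h1 : ∀ k, A k ≤ A' k) (h2 : ∀ k, A' k ≤ B' k) (h3 : ∀ k, B' k ≤ B k) :
    gradedDist n A' B' ≤ gradedDist n A B := by
  have hAB : ∀ k, A k ≤ B k := fun k => (h1 k).trans ((h2 k).trans (h3 k))
  rw [gd_nested A' B' h2, gd_nested A B hAB]
  apply limsup_le_limsup
  · refine Eventually.of_forall fun k => ?_
    dsimp only
    rw [div_eq_mul_inv, div_eq_mul_inv]
    refine mul_le_mul_of_nonneg_right ?_ (by positivity)
    have hu : (finrank 𝕜 (B' k) : ℝ) ≤ finrank 𝕜 (B k) :=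
      Nat.cast_le.mpr (Submodule.finrank_mono (h3 k))
    have hl : (finrank 𝕜 (A k) : ℝ) ≤ finrank 𝕜 (A' k) :=
      Nat.cast_le.mpr (Submodule.finrank_mono (h1 k))
    linarith
  · exact IsBoundedUnder.isCoboundedUnder_le
      (isBoundedUnder_of ⟨0, fun k => (g_bounds hn hC A' B' h2 k).1⟩)
  · exact isBoundedUnder_of ⟨max C 0, fun k => (g_bounds hn hC A B hAB k).2⟩

end aux

theorem stmt7 {𝕜 : Type*} [Field 𝕜] {V : ℕ → Type*}
    [∀ k, AddCommGroup (V k)] [∀ k, Module 𝕜 (V k)] [∀ k, FiniteDimensional 𝕜 (V k)]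
    (n : ℕ) (hn : 1 ≤ n)
    (hbdd : ∃ C : ℝ, ∀ k : ℕ, 1 ≤ k → (Module.finrank 𝕜 (V k) : ℝ) ≤ C * (k : ℝ) ^ n)
    (W W' : ℕ → ∀ k, Submodule 𝕜 (V k))
    (hWmono : ∀ i k, W i k ≤ W (i + 1) k)
    (hW'anti : ∀ i k, W' (i + 1) k ≤ W' i k)
    (hsub : ∀ i k, W i k ≤ W' i k)
    (hd : Tendsto (fun i => gradedDist n (W i) (W' i)) atTop (nhds 0)) :
    gradedDist n (fun k => ⨆ j, W j k) (fun k => ⨅ j, W' j k) = 0 ∧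
    Tendsto (fun i => gradedDist n (W i) (fun k => ⨆ j, W j k)) atTop (nhds 0) ∧
    Tendsto (fun i => gradedDist n (W' i) (fun k => ⨅ j, W' j k)) atTop (nhds 0) := by
  obtain ⟨C, hC⟩ := hbdd
  have hM : ∀ k, Monotone fun i => W i k := fun k =>
    monotone_nat_of_le_succ fun i => hWmono i k
  have hA : ∀ k, Antitone fun i => W' i k := fun k =>
    antitone_nat_of_succ_le fun i => hW'anti i k
  have hsupW' : ∀ i k, (⨆ j, W j k) ≤ W' i k := fun i k =>
    iSup_le fun j => ((hM k (le_max_right i j)).trans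
      ((hsub _ k).trans (hA k (le_max_left i j))))
  have hWinf : ∀ i k, W i k ≤ ⨅ j, W' j k := fun i k =>
    le_iInf fun j => ((hM k (le_max_left i j)).trans
      ((hsub _ k).trans (hA k (le_max_right i j))))
  have hsupinf : ∀ k, (⨆ j, W j k) ≤ ⨅ j, W' j k := fun k =>
    le_iInf fun j => hsupW' j k
  have hWsup : ∀ i k, W i k ≤ ⨆ j, W j k := fun i k => le_iSup (fun j => W j k) i
  have hinfW' : ∀ i k, (⨅ j, W' j k) ≤ W' i k := fun i k => iInf_le (fun j => W' j k) i
  refine ⟨?_, ?_, ?_⟩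
  · refine le_antisymm ?_ (gd_nonneg hn hC _ _ hsupinf)
    refine ge_of_tendsto hd (Eventually.of_forall fun i => ?_)
    exact gd_mono hn hC (W i) _ _ (W' i) (hWsup i) hsupinf (hinfW' i)
  · refine squeeze_zero (fun i => gd_nonneg hn hC _ _ (hWsup i)) (fun i => ?_) hd
    exact gd_mono hn hC (W i) (W i) _ (W' i) (fun k => le_rfl) (hWsup i) (hsupW' i)
  · refine squeeze_zero (fun i => ?_) (fun i => ?_) hd
    · rw [gd_symm]
      exact gd_nonneg hn hC _ _ (hinfW' i)
    · rw [gd_symm]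
      exact gd_mono hn hC (W i) _ (W' i) (W' i) (hWinf i) (hinfW' i) (fun k => le_rfl)
end

section
/- Let $\alpha, \beta_1, \ldots, \beta_m \in \mathbb{Z}^n$ and let $\Delta$ be the convex hull of $\{\beta_1, \ldots, \beta_m\}$ in $\mathbb{R}^n$. Then the function $z \mapsto |z^{\alpha}|^2 \left(\sum_{i=1}^m |z^{\beta_i}|^2\right)^{-1}$ is bounded on $(\mathbb{C}^*)^n$ if and only if $\alpha \in \Delta$. -/
/-!
Writing `x = (2 log |z_i|)_i`, one has `|z^γ|² = exp ⟨γ, x⟩`, and every `x ∈ ℝⁿ` arises this way,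
so the question is whether `exp ⟨α, x⟩ / ∑ⱼ exp ⟨βⱼ, x⟩` is bounded on `ℝⁿ`, i.e. over linear
functionals. If `α ∈ Δ`, then `⟨α, x⟩ ≤ maxⱼ ⟨βⱼ, x⟩` and the ratio is at most `1`. If `α ∉ Δ`,
Hahn–Banach gives a functional `f` and `u` with `f βⱼ < u < f α`; along `t f` the ratio is at least
`exp (t (f α - u)) / m`, which is unbounded as `t → ∞`.
-/

open Finset Set Real Filter

section ConvexHull

variable {E ι : Type*} [AddCommGroup E] [Module ℝ E] [Fintype ι] {a : E} {b : ι → E}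

theorem exp_le_sum_exp_of_mem_convexHull (ha : a ∈ convexHull ℝ (range b)) (φ : E →ₗ[ℝ] ℝ) :
    exp (φ a) ≤ ∑ j, exp (φ (b j)) := by
  obtain ⟨_, ⟨j, rfl⟩, hj⟩ :=
    (φ.convexOn convex_univ).exists_ge_of_mem_convexHull (subset_univ _) ha
  calc exp (φ a) ≤ exp (φ (b j)) := exp_le_exp.2 hj
    _ ≤ ∑ j, exp (φ (b j)) :=
      single_le_sum (f := fun j => exp (φ (b j))) (fun j _ => (exp_pos _).le) (Finset.mem_univ j)

variable [TopologicalSpace E] [IsTopologicalAddGroup E] [ContinuousSMul ℝ E]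
  [LocallyConvexSpace ℝ E] [T2Space E]

theorem exists_mul_sum_exp_lt_exp_of_notMem_convexHull (ha : a ∉ convexHull ℝ (range b))
    (C : ℝ) : ∃ φ : StrongDual ℝ E, C * ∑ j, exp (φ (b j)) < exp (φ a) := by
  obtain ⟨f, u, hfb, hfa⟩ := geometric_hahn_banach_closed_point (convex_convexHull ℝ _)
    ((finite_range b).isClosed_convexHull ℝ) ha
  have hgrowth : Tendsto (fun t => exp (t * (f a - u))) atTop atTop :=
    tendsto_exp_atTop.comp (tendsto_id.atTop_mul_const (sub_pos.2 hfa))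
  obtain ⟨t, ht, ht0⟩ :=
    ((hgrowth.eventually_gt_atTop (|C| * Fintype.card ι)).and (eventually_ge_atTop 0)).exists
  have hsum : ∑ j, exp (t * f (b j)) ≤ Fintype.card ι * exp (t * u) := by
    have hb (j : ι) : f (b j) ≤ u := (hfb _ (subset_convexHull ℝ _ ⟨j, rfl⟩)).le
    calc ∑ j, exp (t * f (b j)) ≤ ∑ _j : ι, exp (t * u) :=
          sum_le_sum fun j _ => exp_le_exp.2 (mul_le_mul_of_nonneg_left (hb j) ht0)
      _ = Fintype.card ι * exp (t * u) := by rw [sum_const, card_univ, nsmul_eq_mul]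
  refine ⟨t • f, ?_⟩
  simp only [smul_apply, smul_eq_mul]
  calc C * ∑ j, exp (t * f (b j)) ≤ |C| * (Fintype.card ι * exp (t * u)) :=
        mul_le_mul (le_abs_self C) hsum (sum_nonneg fun j _ => (exp_pos _).le) (abs_nonneg C)
    _ < exp (t * (f a - u)) * exp (t * u) := by
        rw [← mul_assoc]
        exact mul_lt_mul_of_pos_right ht (exp_pos _)
    _ = exp (t * f a) := by rw [← exp_add]; ring_nf

theorem exists_forall_exp_div_sum_exp_le_iff [Nonempty ι] :
    (∃ C, ∀ φ : StrongDual ℝ E, exp (φ a) / ∑ j, exp (φ (b j)) ≤ C) ↔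
      a ∈ convexHull ℝ (range b) := by
  refine ⟨fun ⟨C, hC⟩ => ?_, fun ha => ⟨1, fun φ => ?_⟩⟩
  · by_contra ha
    obtain ⟨φ, hφ⟩ := exists_mul_sum_exp_lt_exp_of_notMem_convexHull ha C
    exact (hC φ).not_gt ((lt_div_iff₀ (sum_pos (fun j _ => exp_pos _) univ_nonempty)).2 hφ)
  · exact div_le_one_of_le₀ (exp_le_sum_exp_of_mem_convexHull ha φ.toLinearMap)
      (sum_nonneg fun j _ => (exp_pos _).le)

end ConvexHull

section LogNormSq

variable {κ : Type*} [Fintype κ]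

noncomputable def logNormSqDual (z : κ → ℂ) : StrongDual ℝ (κ → ℝ) :=
  ∑ i, (2 * log ‖z i‖) • ContinuousLinearMap.proj i

theorem logNormSqDual_apply (z : κ → ℂ) (v : κ → ℝ) :
    logNormSqDual z v = ∑ i, v i * (2 * log ‖z i‖) := by
  simp [logNormSqDual, mul_comm]

theorem norm_prod_zpow_sq {z : κ → ℂ} (hz : ∀ i, z i ≠ 0) (γ : κ → ℤ) :
    ‖∏ i, z i ^ γ i‖ ^ 2 = exp (logNormSqDual z fun i => γ i) := by
  rw [logNormSqDual_apply, exp_sum, norm_prod, ← Finset.prod_pow]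
  refine prod_congr rfl fun i _ => ?_
  rw [norm_zpow, ← rpow_intCast, rpow_def_of_pos (norm_pos_iff.2 (hz i)), ← exp_nat_mul]
  push_cast
  ring_nf

theorem forall_logNormSqDual_iff {P : StrongDual ℝ (κ → ℝ) → Prop} :
    (∀ z : κ → ℂ, (∀ i, z i ≠ 0) → P (logNormSqDual z)) ↔ ∀ φ, P φ := by
  refine ⟨fun h φ => ?_, fun h z _ => h _⟩
  classical
  convert h (fun i => ((exp (φ (Pi.single i 1) / 2) : ℝ) : ℂ)) fun i => by simp
  refine ContinuousLinearMap.coe_injective (LinearMap.pi_ext fun i x => ?_)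
  simp only [ContinuousLinearMap.coe_coe, logNormSqDual_apply, Complex.norm_real, norm_eq_abs,
    abs_exp, log_exp, Pi.single_apply, ite_mul, zero_mul, sum_ite_eq', Finset.mem_univ, if_true]
  rw [mul_div_cancel₀ _ two_ne_zero, ← smul_eq_mul, ← map_smul, ← Pi.single_smul, smul_eq_mul,
    mul_one]

end LogNormSq

theorem stmt9 {n m : ℕ} (hm : 0 < m) (α : Fin n → ℤ) (β : Fin m → Fin n → ℤ) :
    (∃ C : ℝ, ∀ z : Fin n → ℂ, (∀ i, z i ≠ 0) →
        ‖∏ i, z i ^ α i‖ ^ 2 / (∑ j, ‖∏ i, z i ^ β j i‖ ^ 2) ≤ C)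
      ↔ (fun i => (α i : ℝ)) ∈
          convexHull ℝ (Set.range fun j => fun i => (β j i : ℝ)) := by
  have : Nonempty (Fin m) := ⟨⟨0, hm⟩⟩
  rw [← exists_forall_exp_div_sum_exp_le_iff]
  refine exists_congr fun C => ?_
  rw [← forall_logNormSqDual_iff]
  refine forall₂_congr fun z hz => ?_
  simp only [norm_prod_zpow_sq hz]
end

section
/- Let $\beta_1, \ldots, \beta_m \in \mathbb{N}^n$ and $\beta \in \mathbb{R}^n$. Then the function $x \mapsto \log\left(\sum_{i=1}^m e^{\langle x, \beta_i\rangle}\right) - \langle x, \beta\rangle$ on $\mathbb{R}^n$ is bounded from below if and only if $\beta$ lies in the convex hull of $\{\beta_1, \ldots, \beta_m\}$. -/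
open Real Set

/-!
If `b = ∑ wⱼ βⱼ` is a convex combination, then `⟨x, b⟩ ≤ log ∑ exp ⟨x, βⱼ⟩` because the
right-hand side is at least each `⟨x, βⱼ⟩` and the half-space it bounds is convex; so the function
is nonnegative. Conversely, if `b` is outside the (closed) convex hull, a separating functional
`f` with `f βⱼ < u < f b` gives, along the ray `x = N f`, the bound
`log m + N (u - f b)`, which tends to `-∞`.
-/

lemma Real.log_sum_exp_le_log_card_add {ι : Type*} [Fintype ι] [Nonempty ι] {a : ι → ℝ} {u : ℝ}
    (h : ∀ j, a j ≤ u) : log (∑ j, exp (a j)) ≤ log (Fintype.card ι) + u := by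
  have hsum : ∑ j, exp (a j) ≤ Fintype.card ι * exp u := by
    simpa using Finset.sum_le_sum fun j (_ : j ∈ Finset.univ) => exp_le_exp.2 (h j)
  calc log (∑ j, exp (a j)) ≤ log (Fintype.card ι * exp u) :=
        log_le_log (Finset.sum_pos (fun j _ => exp_pos _) Finset.univ_nonempty) hsum
    _ = log (Fintype.card ι) + u := by
        rw [log_mul (by positivity) (exp_ne_zero u), log_exp]

section
variable {ι E : Type*} [Fintype ι] [AddCommGroup E] [Module ℝ E] (p : ι → E)

lemma le_log_sum_exp_of_mem_convexHull (f : Module.Dual ℝ E) {b : E}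
    (hb : b ∈ convexHull ℝ (range p)) : f b ≤ log (∑ j, exp (f (p j))) := by
  refine convexHull_min ?_ (convex_halfSpace_le f.isLinear _) hb
  rintro _ ⟨j, rfl⟩
  show f (p j) ≤ _
  rw [← log_exp (f (p j))]
  exact log_le_log (exp_pos _)
    (Finset.single_le_sum (fun k _ => (exp_pos (f (p k))).le) (Finset.mem_univ j))

variable [TopologicalSpace E] [IsTopologicalAddGroup E] [ContinuousSMul ℝ E]
  [LocallyConvexSpace ℝ E] [T2Space E]

lemma exists_log_sum_exp_sub_lt_of_notMem_convexHull [Nonempty ι] {b : E}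
    (hb : b ∉ convexHull ℝ (range p)) (C : ℝ) :
    ∃ f : StrongDual ℝ E, log (∑ j, exp (f (p j))) - f b < C := by
  obtain ⟨f, u, hpu, hub⟩ := geometric_hahn_banach_closed_point (convex_convexHull ℝ _)
    ((finite_range p).isClosed_convexHull ℝ) hb
  obtain ⟨N, hN⟩ := exists_nat_gt ((log (Fintype.card ι) - C) / (f b - u))
  rw [div_lt_iff₀ (sub_pos.2 hub)] at hN
  have hbound : log (∑ j, exp ((N • f) (p j))) ≤ log (Fintype.card ι) + N * u :=
    log_sum_exp_le_log_card_add fun j => by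
      simpa using mul_le_mul_of_nonneg_left
        (hpu _ (subset_convexHull ℝ _ (mem_range_self j))).le N.cast_nonneg
  refine ⟨N • f, ?_⟩
  simp only [smul_apply, nsmul_eq_mul] at hbound ⊢
  linarith

theorem exists_le_log_sum_exp_sub_iff_mem_convexHull [Nonempty ι] {b : E} :
    (∃ C : ℝ, ∀ f : Module.Dual ℝ E, C ≤ log (∑ j, exp (f (p j))) - f b) ↔
      b ∈ convexHull ℝ (range p) := by
  refine ⟨fun ⟨C, hC⟩ => ?_, fun hb => ⟨0, fun f => ?_⟩⟩
  · by_contra hb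
    obtain ⟨f, hf⟩ := exists_log_sum_exp_sub_lt_of_notMem_convexHull p hb C
    exact (hC f.toLinearMap).not_gt hf
  · exact sub_nonneg.2 (le_log_sum_exp_of_mem_convexHull p f hb)

end

theorem stmt10 {n m : ℕ} (hm : 0 < m) (β : Fin m → Fin n → ℕ) (b : Fin n → ℝ) :
    (∃ C : ℝ, ∀ x : Fin n → ℝ,
        C ≤ Real.log (∑ j, Real.exp (∑ i, x i * (β j i : ℝ))) - ∑ i, x i * b i)
      ↔ b ∈ convexHull ℝ (Set.range fun j => fun i => (β j i : ℝ)) := by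
  have : Nonempty (Fin m) := ⟨⟨0, hm⟩⟩
  rw [← exists_le_log_sum_exp_sub_iff_mem_convexHull]
  refine exists_congr fun C => ?_
  rw [(dotProductEquiv ℝ (Fin n)).surjective.forall]
  rfl
end

section
/- Let $\Delta \subseteq \mathbb{R}^n$ be a convex body of positive volume, $\tau^+ \in \mathbb{R}$, and let $(\Delta_\tau)_{\tau \leq \tau^+}$ be a family of convex bodies in $\mathbb{R}^n$ such that: (1) $\tau \mapsto \Delta_\tau$ is decreasing; (2) $\Delta_\tau \to \Delta$ in the Hausdorff metric as $\tau \to -\infty$; (3) the family is concave, i.e., $\Delta_{t\tau + (1-t)\tau'} \supseteq t\Delta_\tau + (1-t)\Delta_{\tau'}$ for all $\tau, \tau' \leq \tau^+$ and $t \in [0,1]$; (4) $\Delta_{\tau^+} = \bigcap_{\tau < \tau^+} \Delta_\tau$. Then $\mathrm{vol}(\Delta_{\tau'}) > 0$ for all $\tau' < \tau^+$, and $\tau \mapsto \Delta_\tau$ is continuous in the Hausdorff metric on $(-\infty, \tau^+)$. -/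
/-!
Positivity of volume: the bodies `Δ (τ⁺ - k)` increase to a convex set whose closure contains the
limit `Δ`, and the closure of a convex set has the same Haar measure as the set, so some
`Δ (τ⁺ - k)` has positive volume. Concavity then puts a homothetic copy of it, with positive ratio,
inside every `Δ τ'` with `τ' < τ⁺`.

Continuity: for `a ≤ b < τ⁺` and `p ∈ Δ τ⁺`, concavity with `t = (b - a) / (τ⁺ - a)` gives
`t • p + (1 - t) • Δ a ⊆ Δ b ⊆ Δ a`, so the Hausdorff distance from `Δ b` to `Δ a` is at most
`t * diam (Δ a)`; hence `τ ↦ Δ τ` is locally Lipschitz on `(-∞, τ⁺)`.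
-/

open Filter MeasureTheory Metric Set Topology
open scoped Pointwise

theorem subset_closure_iUnion_of_tendsto_hausdorffDist {α ι : Type*} [PseudoMetricSpace α]
    {l : Filter ι} [l.NeBot] {A : ι → Set α} {B : Set α}
    (hfin : ∀ᶠ i in l, hausdorffEDist (A i) B ≠ ⊤)
    (hlim : Tendsto (fun i => hausdorffDist (A i) B) l (𝓝 0)) :
    B ⊆ closure (⋃ i, A i) := by
  intro z hz
  rw [Metric.mem_closure_iff]
  intro ε hε
  obtain ⟨i, hi, hfi⟩ := ((hlim.eventually (gt_mem_nhds hε)).and hfin).exists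
  obtain ⟨y, hy, hyz⟩ := exists_dist_lt_of_hausdorffDist_lt' hz hi hfi
  exact ⟨y, mem_iUnion.2 ⟨i, hy⟩, by rwa [dist_comm]⟩

section Concave

variable {E : Type*} [NormedAddCommGroup E] [NormedSpace ℝ E]

def IsConcaveFamilyOn (Δ : ℝ → Set E) (s : Set ℝ) : Prop :=
  ∀ ⦃τ⦄, τ ∈ s → ∀ ⦃τ'⦄, τ' ∈ s → ∀ ⦃t : ℝ⦄, 0 ≤ t → t ≤ 1 →
    t • Δ τ + (1 - t) • Δ τ' ⊆ Δ (t * τ + (1 - t) * τ')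

theorem hausdorffDist_le_mul_diam_of_smul_add_smul_subset {A B : Set E} {p : E} {t : ℝ}
    (ht : 0 ≤ t) (hB : Bornology.IsBounded B) (hp : p ∈ B) (hAB : A ⊆ B)
    (h : t • {p} + (1 - t) • B ⊆ A) :
    hausdorffDist A B ≤ t * diam B := by
  have hdiam : 0 ≤ t * diam B := mul_nonneg ht diam_nonneg
  refine hausdorffDist_le_of_mem_dist hdiam (fun x hx => ⟨x, hAB hx, by simpa using hdiam⟩) ?_
  intro x hx
  refine ⟨t • p + (1 - t) • x,
    h (add_mem_add (smul_mem_smul_set rfl) (smul_mem_smul_set hx)), ?_⟩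
  calc dist x (t • p + (1 - t) • x) = t * dist x p := by
        rw [dist_eq_norm, dist_eq_norm, show x - (t • p + (1 - t) • x) = t • (x - p) by module,
          norm_smul, Real.norm_of_nonneg ht]
    _ ≤ t * diam B := mul_le_mul_of_nonneg_left (dist_le_diam_of_mem hB hx hp) ht

variable {Δ : ℝ → Set E} {τp : ℝ}

theorem hausdorffDist_le_of_isConcaveFamilyOn (hdec : AntitoneOn Δ (Iic τp))
    (hconc : IsConcaveFamilyOn Δ (Iic τp)) {p : E} (hp : p ∈ Δ τp) {a b c d : ℝ}
    (hc : Bornology.IsBounded (Δ c)) (hca : c ≤ a) (hab : a ≤ b) (hbd : b ≤ d) (hd : d < τp) :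
    hausdorffDist (Δ b) (Δ a) ≤ diam (Δ c) / (τp - d) * (b - a) := by
  have haτ : a ≤ τp := by linarith
  have ha : 0 < τp - a := by linarith
  set t := (b - a) / (τp - a)
  have ht0 : 0 ≤ t := div_nonneg (by linarith) ha.le
  have hsub := hconc (self_mem_Iic (a := τp)) haτ ht0 ((div_le_one ha).2 (by linarith))
  rw [show t * τp + (1 - t) * a = b by simp only [t]; field_simp; ring] at hsub
  have hca' : Δ a ⊆ Δ c := hdec (show c ≤ τp by linarith) haτ hca
  calc hausdorffDist (Δ b) (Δ a) ≤ t * diam (Δ a) :=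
        hausdorffDist_le_mul_diam_of_smul_add_smul_subset ht0 (hc.subset hca')
          (hdec haτ self_mem_Iic haτ hp) (hdec haτ (show b ≤ τp by linarith) hab)
          ((add_subset_add_right (smul_set_mono (singleton_subset_iff.2 hp))).trans hsub)
    _ ≤ (b - a) / (τp - d) * diam (Δ c) :=
        mul_le_mul (div_le_div_of_nonneg_left (by linarith) (by linarith) (by linarith))
          (diam_mono hca' hc) diam_nonneg (div_nonneg (by linarith) (by linarith))
    _ = diam (Δ c) / (τp - d) * (b - a) := by ring

theorem tendsto_hausdorffDist_of_isConcaveFamilyOn (hdec : AntitoneOn Δ (Iic τp))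
    (hconc : IsConcaveFamilyOn Δ (Iic τp)) {p : E} (hp : p ∈ Δ τp)
    (hbdd : ∀ τ ≤ τp, Bornology.IsBounded (Δ τ)) {τ : ℝ} (hτ : τ < τp) :
    Tendsto (fun σ => hausdorffDist (Δ σ) (Δ τ)) (𝓝 τ) (𝓝 0) := by
  set K := diam (Δ (τ - 1)) / (τp - (τ + τp) / 2)
  have hnear : ∀ᶠ σ in 𝓝 τ, σ ∈ Icc (τ - 1) ((τ + τp) / 2) :=
    Icc_mem_nhds (by linarith) (by linarith)
  have hbound : ∀ σ ∈ Icc (τ - 1) ((τ + τp) / 2), hausdorffDist (Δ σ) (Δ τ) ≤ K * |σ - τ| := by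
    intro σ hσ
    have hc := hbdd (τ - 1) (by linarith)
    rcases le_total σ τ with hστ | hτσ
    · rw [hausdorffDist_comm, abs_of_nonpos (by linarith), neg_sub]
      exact hausdorffDist_le_of_isConcaveFamilyOn hdec hconc hp hc hσ.1 hστ (by linarith)
        (by linarith)
    · rw [abs_of_nonneg (by linarith)]
      exact hausdorffDist_le_of_isConcaveFamilyOn hdec hconc hp hc (by linarith) hτσ hσ.2
        (by linarith)
  have hK : Tendsto (fun σ => K * |σ - τ|) (𝓝 τ) (𝓝 0) :=
    (show Continuous fun σ => K * |σ - τ| by fun_prop).tendsto' τ 0 (by simp)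
  exact squeeze_zero' (Eventually.of_forall fun _ => hausdorffDist_nonneg)
    (hnear.mono hbound) hK

end Concave

section Measure

variable {E : Type*} [NormedAddCommGroup E] [NormedSpace ℝ E] [MeasurableSpace E] [BorelSpace E]
  [FiniteDimensional ℝ E] (μ : Measure E) [μ.IsAddHaarMeasure]

theorem Convex.addHaar_closure {s : Set E} (hs : Convex ℝ s) : μ (closure s) = μ s :=
  measure_closure_of_null_frontier (hs.addHaar_frontier μ)

theorem exists_addHaar_ne_zero_of_tendsto_hausdorffDist {ι : Type*} [Countable ι]
    {l : Filter ι} [l.NeBot] {A : ι → Set E} {B : Set E} (hdir : Directed (· ⊆ ·) A)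
    (hconv : ∀ i, Convex ℝ (A i)) (hfin : ∀ᶠ i in l, hausdorffEDist (A i) B ≠ ⊤)
    (hlim : Tendsto (fun i => hausdorffDist (A i) B) l (𝓝 0)) (hB : μ B ≠ 0) :
    ∃ i, μ (A i) ≠ 0 := by
  by_contra! h
  refine hB (measure_mono_null (subset_closure_iUnion_of_tendsto_hausdorffDist hfin hlim) ?_)
  rw [(hdir.convex_iUnion fun i => hconv i).addHaar_closure μ]
  exact measure_iUnion_null h

theorem addHaar_pos_of_add_smul_subset {s u A : Set E} {x : E} {t : ℝ} (ht : t ≠ 0)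
    (hs : μ s ≠ 0) (hx : x ∈ u) (h : u + t • s ⊆ A) : 0 < μ A :=
  calc 0 < μ (t • s) := by
        rw [Measure.addHaar_smul]
        exact ENNReal.mul_pos (by simp [ht]) hs
    _ = μ ({x} + t • s) := by
        rw [singleton_add]
        exact (measure_vadd μ x _).symm
    _ ≤ μ A := measure_mono ((add_subset_add_right (singleton_subset_iff.2 hx)).trans h)

variable {Δ : ℝ → Set E} {τp : ℝ}

theorem addHaar_pos_of_isConcaveFamilyOn (hdec : AntitoneOn Δ (Iic τp))
    (hconc : IsConcaveFamilyOn Δ (Iic τp)) {p : E} (hp : p ∈ Δ τp) {σ τ : ℝ} (hσp : σ ≤ τp)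
    (hσ : μ (Δ σ) ≠ 0) (hτ : τ < τp) : 0 < μ (Δ τ) := by
  rcases le_or_gt τ σ with hτσ | hστ
  · exact (pos_iff_ne_zero.2 hσ).trans_le (measure_mono (hdec (hτσ.trans hσp) hσp hτσ))
  have hden : 0 < τp - σ := by linarith
  set t := (τp - τ) / (τp - σ)
  have hsub := hconc (self_mem_Iic (a := τp)) hσp
    (show 0 ≤ 1 - t by rw [sub_nonneg, div_le_one hden]; linarith)
    (show 1 - t ≤ 1 from sub_le_self _ (div_pos (by linarith) hden).le)
  rw [sub_sub_cancel, show (1 - t) * τp + t * σ = τ by simp only [t]; field_simp; ring] at hsub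
  exact addHaar_pos_of_add_smul_subset μ (div_pos (by linarith) hden).ne' hσ
    (smul_mem_smul_set hp) hsub

end Measure

theorem stmt12_general {n : ℕ} (Δlim : Set (EuclideanSpace ℝ (Fin n))) (τp : ℝ)
    (Δ : ℝ → Set (EuclideanSpace ℝ (Fin n)))
    (hΔne : Δlim.Nonempty) (hΔc : IsCompact Δlim)
    (hΔvol : 0 < volume Δlim)
    (hbody : ∀ τ ≤ τp, (Δ τ).Nonempty ∧ IsCompact (Δ τ) ∧ Convex ℝ (Δ τ))
    (hdec : ∀ σ τ : ℝ, σ ≤ τ → τ ≤ τp → Δ τ ⊆ Δ σ)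
    (hlim : Tendsto (fun τ => hausdorffDist (Δ τ) Δlim) atBot (nhds 0))
    (hconc : ∀ τ ≤ τp, ∀ τ' ≤ τp, ∀ t : ℝ, 0 ≤ t → t ≤ 1 →
        t • Δ τ + (1 - t) • Δ τ' ⊆ Δ (t * τ + (1 - t) * τ')) :
    (∀ τ' < τp, 0 < volume (Δ τ')) ∧
    (∀ τ < τp, ∀ ε > 0, ∃ δ > 0, ∀ σ < τp, |σ - τ| < δ →
        hausdorffDist (Δ σ) (Δ τ) < ε) := by
  obtain ⟨p, hp⟩ := (hbody τp le_rfl).1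
  have hanti : AntitoneOn Δ (Iic τp) := fun σ _ τ hτ hστ => hdec σ τ hστ hτ
  have hconc' : IsConcaveFamilyOn Δ (Iic τp) := fun τ hτ τ' hτ' t => hconc τ hτ τ' hτ' t
  have hbdd : ∀ τ ≤ τp, Bornology.IsBounded (Δ τ) := fun τ hτ => (hbody τ hτ).2.1.isBounded
  have hk : ∀ k : ℕ, τp - k ≤ τp := fun k => sub_le_self _ k.cast_nonneg
  refine ⟨fun τ' hτ' => ?_, fun τ hτ ε hε => ?_⟩
  · have hseq : Tendsto (fun k : ℕ => τp - k) atTop atBot :=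
      tendsto_atBot_add_const_left _ τp
        (tendsto_neg_atTop_atBot.comp tendsto_natCast_atTop_atTop)
    obtain ⟨k, hk₀⟩ := exists_addHaar_ne_zero_of_tendsto_hausdorffDist volume
      (A := fun k : ℕ => Δ (τp - k))
      (Monotone.directed_le fun i j hij => hdec _ _ (by gcongr) (hk i))
      (fun k => (hbody _ (hk k)).2.2)
      (Eventually.of_forall fun k => hausdorffEDist_ne_top_of_nonempty_of_bounded
        (hbody _ (hk k)).1 hΔne (hbdd _ (hk k)) hΔc.isBounded)
      (hlim.comp hseq) hΔvol.ne'
    exact addHaar_pos_of_isConcaveFamilyOn volume hanti hconc' hp (hk k) hk₀ hτ'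
  · obtain ⟨δ, hδ, h⟩ := Metric.tendsto_nhds_nhds.1
      (tendsto_hausdorffDist_of_isConcaveFamilyOn hanti hconc' hp hbdd hτ) ε hε
    refine ⟨δ, hδ, fun σ _ hσ => ?_⟩
    simpa [Real.dist_eq, abs_of_nonneg hausdorffDist_nonneg] using
      h (x := σ) (by rwa [Real.dist_eq])

theorem stmt12 {n : ℕ} (Δlim : Set (EuclideanSpace ℝ (Fin n))) (τp : ℝ)
    (Δ : ℝ → Set (EuclideanSpace ℝ (Fin n)))
    (hΔne : Δlim.Nonempty) (hΔc : IsCompact Δlim) (hΔconv : Convex ℝ Δlim)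
    (hΔvol : 0 < volume Δlim)
    (hbody : ∀ τ ≤ τp, (Δ τ).Nonempty ∧ IsCompact (Δ τ) ∧ Convex ℝ (Δ τ))
    (hdec : ∀ σ τ : ℝ, σ ≤ τ → τ ≤ τp → Δ τ ⊆ Δ σ)
    (hlim : Tendsto (fun τ => hausdorffDist (Δ τ) Δlim) atBot (nhds 0))
    (hconc : ∀ τ ≤ τp, ∀ τ' ≤ τp, ∀ t : ℝ, 0 ≤ t → t ≤ 1 →
        t • Δ τ + (1 - t) • Δ τ' ⊆ Δ (t * τ + (1 - t) * τ'))
    (htp : Δ τp = ⋂ (τ : ℝ) (_ : τ < τp), Δ τ) :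
    (∀ τ' < τp, 0 < volume (Δ τ')) ∧
    (∀ τ < τp, ∀ ε > 0, ∃ δ > 0, ∀ σ < τp, |σ - τ| < δ →
        hausdorffDist (Δ σ) (Δ τ) < ε) :=
  stmt12_general Δlim τp Δ hΔne hΔc hΔvol hbody hdec hlim hconc
end

section
/- Let $\Delta \subseteq \mathbb{R}^n$ be a convex body with positive volume and let $(\Delta_\tau)_{\tau \leq \tau^+}$ be an Okounkov test curve relative to $\Delta$. Define the Legendre transform $G[\Delta_\bullet] : \Delta \to [-\infty, \infty)$ by $G[\Delta_\bullet](a) := \sup\{\tau < \tau^+ : a \in \Delta_\tau\}$ (with $\sup \emptyset = -\infty$). Then $G[\Delta_\bullet]$ is concave, finite on the interior of $\Delta$, and upper semicontinuous on $\Delta$, and for every $\tau \leq \tau^+$ one has $\{a \in \Delta : G[\Delta_\bullet](a) \geq \tau\} = \Delta_\tau$. -/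
/-!
Concavity of `G` is the concavity of the family read through its superlevel sets: if `a ∈ Δ_α`
and `b ∈ Δ_β` then `t a + (1 - t) b ∈ Δ_{t α + (1 - t) β}`.

The identity `{G ≥ τ} = Δ_τ` amounts to `Δ_τ = ⋂_{σ < τ} Δ_σ`. For `τ = τ⁺` this is assumed; for
`τ < τ⁺`, if `a` lies in every `Δ_σ` with `σ < τ` and `b ∈ Δ_{τ⁺}`, concavity puts `t b + (1 - t) a`
in `Δ_τ` for every `t ∈ (0, 1)`, and these points tend to `a` in the closed set `Δ_τ`. Upper
semicontinuity follows since the superlevel sets are closed.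

`G` is finite on the interior of `Δ` because a point `a` with `B(a, r) ⊆ Δ` lies in every compact
convex `K` with `d_H(K, Δ) < r`: otherwise, moving `a` away from its nearest point in `K` by the
distance `d_H(K, Δ)` yields a point of `Δ` farther than `d_H(K, Δ)` from `K`.
-/

open Filter MeasureTheory Metric
open scoped Pointwise

/-- The Legendre transform of an Okounkov test curve:
`G[Δ_•](a) = sup {τ < τ⁺ : a ∈ Δ_τ}`, with `sup ∅ = -∞`, valued in `EReal`. -/
noncomputable def legendre {n : ℕ} (Δ : ℝ → Set (EuclideanSpace ℝ (Fin n))) (τp : ℝ)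
    (a : EuclideanSpace ℝ (Fin n)) : EReal :=
  sSup ((fun τ : ℝ => (τ : EReal)) '' {τ : ℝ | τ < τp ∧ a ∈ Δ τ})

open Set
open scoped RealInnerProductSpace Topology

theorem EReal.mul_add_mul_le_of_forall_lt {x y z : EReal} {t : ℝ} (ht0 : 0 < t) (ht1 : t < 1)
    (hx : x ≠ ⊤) (hy : y ≠ ⊤)
    (h : ∀ α β : ℝ, (α : EReal) < x → (β : EReal) < y → ((t * α + (1 - t) * β : ℝ) : EReal) ≤ z) :
    (t : EReal) * x + ((1 - t : ℝ) : EReal) * y ≤ z := by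
  induction x using EReal.rec with
  | bot => simp [EReal.mul_bot_of_pos (EReal.coe_pos.2 ht0)]
  | top => exact absurd rfl hx
  | coe x =>
    induction y using EReal.rec with
    | bot =>
      rw [EReal.mul_bot_of_pos (EReal.coe_pos.2 (by linarith)), EReal.add_bot]
      exact bot_le
    | top => exact absurd rfl hy
    | coe y =>
      rw [← EReal.coe_mul, ← EReal.coe_mul, ← EReal.coe_add]
      refine EReal.ge_of_forall_gt_iff_ge.1 fun w hw => ?_
      have hw : w < t * x + (1 - t) * y := EReal.coe_lt_coe_iff.1 hw
      have := h (x - (t * x + (1 - t) * y - w)) (y - (t * x + (1 - t) * y - w))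
        (EReal.coe_lt_coe_iff.2 (by linarith)) (EReal.coe_lt_coe_iff.2 (by linarith))
      convert this using 2
      ring

theorem EReal.upperSemicontinuousOn_of_isClosed_superlevel {α : Type*} [TopologicalSpace α]
    {f : α → EReal} {s : Set α} (h : ∀ τ : ℝ, IsClosed {x ∈ s | (τ : EReal) ≤ f x}) :
    UpperSemicontinuousOn f s := by
  refine upperSemicontinuousOn_iff_preimage_Ici.2 fun b =>
    ⟨⋂ (τ : ℝ) (_ : (τ : EReal) < b), {x ∈ s | (τ : EReal) ≤ f x},
      isClosed_biInter fun τ _ => h τ, ?_⟩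
  ext x
  simp only [mem_inter_iff, mem_preimage, mem_Ici, mem_iInter, mem_sep_iff]
  exact ⟨fun ⟨hx, hb⟩ => ⟨hx, fun τ hτ => ⟨hx, hτ.le.trans hb⟩⟩,
    fun ⟨hx, hb⟩ => ⟨hx, EReal.ge_of_forall_gt_iff_ge.1 fun τ hτ => (hb τ hτ).2⟩⟩

theorem mem_of_tendsto_hausdorffDist {α ι : Type*} [PseudoMetricSpace α] {l : Filter ι} [l.NeBot]
    {F : ι → Set α} {S : Set α} {x : α} (hS : IsClosed S) (hSne : S.Nonempty)
    (hx : ∀ᶠ i in l, x ∈ F i ∧ hausdorffEDist (F i) S ≠ ⊤)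
    (hF : Tendsto (fun i => hausdorffDist (F i) S) l (𝓝 0)) : x ∈ S := by
  have : infDist x S ≤ 0 :=
    ge_of_tendsto hF (hx.mono fun i hi => infDist_le_hausdorffDist_of_mem hi.1 hi.2)
  exact (hS.mem_iff_infDist_zero hSne).2 (this.antisymm infDist_nonneg)

section InnerProductSpace

variable {E : Type*} [NormedAddCommGroup E] [InnerProductSpace ℝ E]

theorem one_add_mul_norm_sub_le_dist_add_smul_sub {K : Set E} {a p x : E}
    (hp : ∀ y ∈ K, ⟪a - p, y - p⟫ ≤ 0) (c : ℝ) (hx : x ∈ K) :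
    (1 + c) * ‖a - p‖ ≤ dist (a + c • (a - p)) x := by
  have key : (1 + c) * ‖a - p‖ * ‖a - p‖ ≤ dist (a + c • (a - p)) x * ‖a - p‖ :=
    calc (1 + c) * ‖a - p‖ * ‖a - p‖ ≤ (1 + c) * ‖a - p‖ ^ 2 - ⟪a - p, x - p⟫ := by
          nlinarith [hp x hx]
      _ = ⟪(1 + c) • (a - p) - (x - p), a - p⟫ := by
          rw [inner_sub_left ((1 + c) • (a - p)), real_inner_smul_left,
            real_inner_self_eq_norm_sq, real_inner_comm (x - p)]
      _ = ⟪a + c • (a - p) - x, a - p⟫ := by congr 1; module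
      _ ≤ ‖a + c • (a - p) - x‖ * ‖a - p‖ := real_inner_le_norm _ _
      _ = dist (a + c • (a - p)) x * ‖a - p‖ := by rw [dist_eq_norm]
  rcases (norm_nonneg (a - p)).eq_or_lt with h | h
  · rw [← h, mul_zero]
    exact dist_nonneg
  · exact le_of_mul_le_mul_right key h

theorem mem_of_ball_subset_of_hausdorffDist_lt {K C : Set E} (hK : IsCompact K)
    (hKne : K.Nonempty) (hKconv : Convex ℝ K) (hC : Bornology.IsBounded C) {a : E} {r : ℝ}
    (hball : ball a r ⊆ C) (hd : hausdorffDist K C < r) : a ∈ K := by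
  by_contra ha
  obtain ⟨p, hpK, hap⟩ := hK.exists_infDist_eq_dist hKne a
  have hpos : 0 < ‖a - p‖ := norm_pos_iff.2 (sub_ne_zero.2 fun h => ha (h ▸ hpK))
  have hobtuse : ∀ y ∈ K, ⟪a - p, y - p⟫ ≤ 0 := by
    refine (norm_eq_iInf_iff_real_inner_le_zero hKconv hpK).1 ?_
    rw [← dist_eq_norm, ← hap, infDist_eq_iInf]
    simp only [dist_eq_norm]
  set s := hausdorffDist K C
  set b := a + (s / ‖a - p‖) • (a - p)
  have hs : 0 ≤ s := hausdorffDist_nonneg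
  have hbC : b ∈ C := hball <| by
    rw [mem_ball, dist_self_add_left, norm_smul, Real.norm_of_nonneg (by positivity),
      div_mul_cancel₀ _ hpos.ne']
    exact hd
  -- `p` is still the point of `K` nearest to `b`
  have hfar : s < infDist b K :=
    calc s < (1 + s / ‖a - p‖) * ‖a - p‖ := by
          rw [add_mul, div_mul_cancel₀ _ hpos.ne', one_mul]
          linarith
      _ ≤ infDist b K := (le_infDist hKne).2 fun x hx =>
          one_add_mul_norm_sub_le_dist_add_smul_sub hobtuse _ hx
  have hclose : infDist b K ≤ hausdorffDist C K :=
    infDist_le_hausdorffDist_of_mem hbC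
      (hausdorffEDist_ne_top_of_nonempty_of_bounded ⟨b, hbC⟩ hKne hC hK.isBounded)
  rw [hausdorffDist_comm] at hclose
  exact hfar.not_ge hclose

theorem eventually_mem_of_mem_interior {ι : Type*} {l : Filter ι} {F : ι → Set E} {S : Set E}
    (hF : ∀ᶠ i in l, (F i).Nonempty ∧ IsCompact (F i) ∧ Convex ℝ (F i))
    (hS : Bornology.IsBounded S) (hlim : Tendsto (fun i => hausdorffDist (F i) S) l (𝓝 0))
    {a : E} (ha : a ∈ interior S) : ∀ᶠ i in l, a ∈ F i := by
  obtain ⟨r, hr, hball⟩ := Metric.mem_nhds_iff.1 (mem_interior_iff_mem_nhds.1 ha)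
  filter_upwards [hF, hlim.eventually (eventually_lt_nhds hr)] with i ⟨hne, hc, hconv⟩ hi
  exact mem_of_ball_subset_of_hausdorffDist_lt hc hne hconv hS hball hi

end InnerProductSpace

structure IsOkounkovTestCurve {E : Type*} [NormedAddCommGroup E] [NormedSpace ℝ E]
    (Δlim : Set E) (Δ : ℝ → Set E) (τp : ℝ) : Prop where
  body : ∀ τ ≤ τp, (Δ τ).Nonempty ∧ IsCompact (Δ τ) ∧ Convex ℝ (Δ τ)
  antitone : ∀ σ τ : ℝ, σ ≤ τ → τ ≤ τp → Δ τ ⊆ Δ σ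
  tendsto : Tendsto (fun τ => hausdorffDist (Δ τ) Δlim) atBot (𝓝 0)
  concave : ∀ τ ≤ τp, ∀ τ' ≤ τp, ∀ t : ℝ, 0 ≤ t → t ≤ 1 →
    t • Δ τ + (1 - t) • Δ τ' ⊆ Δ (t * τ + (1 - t) * τ')
  eq_iInter : Δ τp = ⋂ (τ : ℝ) (_ : τ < τp), Δ τ

namespace IsOkounkovTestCurve

variable {E : Type*} [NormedAddCommGroup E] [NormedSpace ℝ E] {Δlim : Set E} {Δ : ℝ → Set E}
  {τp : ℝ}

theorem smul_add_smul_mem (hΔ : IsOkounkovTestCurve Δlim Δ τp) {τ τ' t : ℝ} {a b : E}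
    (hτ : τ ≤ τp) (hτ' : τ' ≤ τp) (ht0 : 0 ≤ t) (ht1 : t ≤ 1) (ha : a ∈ Δ τ) (hb : b ∈ Δ τ') :
    t • a + (1 - t) • b ∈ Δ (t * τ + (1 - t) * τ') :=
  hΔ.concave τ hτ τ' hτ' t ht0 ht1 (add_mem_add (smul_mem_smul_set ha) (smul_mem_smul_set hb))

theorem mem_of_forall_lt_mem (hΔ : IsOkounkovTestCurve Δlim Δ τp) {s : ℝ} {a : E}
    (hs : s ≤ τp) (ha : ∀ σ < s, a ∈ Δ σ) : a ∈ Δ s := by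
  rcases hs.eq_or_lt with rfl | hs
  · rw [hΔ.eq_iInter]
    exact mem_iInter₂.2 ha
  obtain ⟨b, hb⟩ := (hΔ.body τp le_rfl).1
  have hmem : ∀ t ∈ Ioo (0 : ℝ) 1, t • b + (1 - t) • a ∈ Δ s := by
    rintro t ⟨ht0, ht1⟩
    have h1t : 0 < 1 - t := sub_pos.2 ht1
    -- the level `σ` with `t τ⁺ + (1 - t) σ = s`
    have hσ : (s - t * τp) / (1 - t) < s := by
      rw [div_lt_iff₀ h1t]
      nlinarith
    have := hΔ.smul_add_smul_mem le_rfl (hσ.le.trans hs.le) ht0.le ht1.le hb (ha _ hσ)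
    rwa [mul_div_cancel₀ _ h1t.ne', add_sub_cancel] at this
  have hlim : Tendsto (fun t : ℝ => t • b + (1 - t) • a) (𝓝[>] 0) (𝓝 a) := by
    have : Continuous (fun t : ℝ => t • b + (1 - t) • a) := by fun_prop
    simpa using (this.tendsto 0).mono_left nhdsWithin_le_nhds
  rw [← (hΔ.body s hs.le).2.1.isClosed.closure_eq]
  exact mem_closure_of_tendsto hlim (eventually_of_mem (Ioo_mem_nhdsGT one_pos) hmem)

theorem subset (hΔ : IsOkounkovTestCurve Δlim Δ τp) (hne : Δlim.Nonempty) (hc : IsCompact Δlim)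
    {τ : ℝ} (hτ : τ ≤ τp) : Δ τ ⊆ Δlim := by
  intro x hx
  refine mem_of_tendsto_hausdorffDist hc.isClosed hne ?_ hΔ.tendsto
  filter_upwards [eventually_le_atBot τ] with σ hσ
  obtain ⟨hσne, hσc, -⟩ := hΔ.body σ (hσ.trans hτ)
  exact ⟨hΔ.antitone σ τ hσ hτ hx,
    hausdorffEDist_ne_top_of_nonempty_of_bounded hσne hne hσc.isBounded hc.isBounded⟩

end IsOkounkovTestCurve

section Legendre

variable {n : ℕ} {Δlim : Set (EuclideanSpace ℝ (Fin n))} {Δ : ℝ → Set (EuclideanSpace ℝ (Fin n))}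
  {τp : ℝ}

theorem coe_le_legendre {τ : ℝ} {a : EuclideanSpace ℝ (Fin n)} (hτ : τ < τp) (ha : a ∈ Δ τ) :
    (τ : EReal) ≤ legendre Δ τp a :=
  le_sSup ⟨τ, ⟨hτ, ha⟩, rfl⟩

theorem legendre_le (a : EuclideanSpace ℝ (Fin n)) : legendre Δ τp a ≤ τp :=
  sSup_le <| by
    rintro _ ⟨τ, ⟨hτ, -⟩, rfl⟩
    exact EReal.coe_le_coe_iff.2 hτ.le

theorem legendre_ne_top (a : EuclideanSpace ℝ (Fin n)) : legendre Δ τp a ≠ ⊤ :=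
  ne_top_of_le_ne_top (EReal.coe_ne_top τp) (legendre_le a)

namespace IsOkounkovTestCurve

theorem mem_of_coe_lt_legendre (hΔ : IsOkounkovTestCurve Δlim Δ τp) {τ : ℝ}
    {a : EuclideanSpace ℝ (Fin n)} (hτ : (τ : EReal) < legendre Δ τp a) : a ∈ Δ τ := by
  obtain ⟨_, ⟨σ, ⟨hστp, haσ⟩, rfl⟩, hτσ⟩ := lt_sSup_iff.1 hτ
  exact hΔ.antitone τ σ (EReal.coe_le_coe_iff.1 hτσ.le) hστp.le haσ

theorem coe_le_legendre_iff (hΔ : IsOkounkovTestCurve Δlim Δ τp) {τ : ℝ} (hτ : τ ≤ τp)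
    {a : EuclideanSpace ℝ (Fin n)} : (τ : EReal) ≤ legendre Δ τp a ↔ ∀ σ < τ, a ∈ Δ σ := by
  refine ⟨fun h σ hσ => hΔ.mem_of_coe_lt_legendre ((EReal.coe_lt_coe_iff.2 hσ).trans_le h),
    fun h => EReal.ge_of_forall_gt_iff_ge.1 fun σ hσ => ?_⟩
  have hσ : σ < τ := EReal.coe_lt_coe_iff.1 hσ
  exact coe_le_legendre (hσ.trans_le hτ) (h σ hσ)

theorem sep_coe_le_legendre_eq (hΔ : IsOkounkovTestCurve Δlim Δ τp) (hne : Δlim.Nonempty)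
    (hc : IsCompact Δlim) {τ : ℝ} (hτ : τ ≤ τp) :
    {a ∈ Δlim | (τ : EReal) ≤ legendre Δ τp a} = Δ τ := by
  ext a
  simp only [mem_sep_iff, hΔ.coe_le_legendre_iff hτ]
  exact ⟨fun ⟨_, ha⟩ => hΔ.mem_of_forall_lt_mem hτ ha,
    fun ha => ⟨hΔ.subset hne hc hτ ha, fun σ hσ => hΔ.antitone σ τ hσ.le hτ ha⟩⟩

theorem upperSemicontinuousOn_legendre (hΔ : IsOkounkovTestCurve Δlim Δ τp)
    (hne : Δlim.Nonempty) (hc : IsCompact Δlim) : UpperSemicontinuousOn (legendre Δ τp) Δlim := by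
  refine EReal.upperSemicontinuousOn_of_isClosed_superlevel fun τ => ?_
  rcases le_or_gt τ τp with hτ | hτ
  · rw [hΔ.sep_coe_le_legendre_eq hne hc hτ]
    exact (hΔ.body τ hτ).2.1.isClosed
  · convert isClosed_empty
    exact eq_empty_of_forall_notMem fun a ha =>
      (legendre_le a).not_gt ((EReal.coe_lt_coe_iff.2 hτ).trans_le ha.2)

theorem legendre_smul_add_smul (hΔ : IsOkounkovTestCurve Δlim Δ τp)
    (a b : EuclideanSpace ℝ (Fin n)) {t : ℝ} (ht0 : 0 ≤ t) (ht1 : t ≤ 1) :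
    (t : EReal) * legendre Δ τp a + ((1 - t : ℝ) : EReal) * legendre Δ τp b
      ≤ legendre Δ τp (t • a + (1 - t) • b) := by
  rcases ht0.eq_or_lt with rfl | ht0
  · simp
  rcases ht1.eq_or_lt with rfl | ht1
  · simp
  refine EReal.mul_add_mul_le_of_forall_lt ht0 ht1 (legendre_ne_top a) (legendre_ne_top b)
    fun α β hα hβ => ?_
  have hατ : α < τp := EReal.coe_lt_coe_iff.1 (hα.trans_le (legendre_le a))
  have hβτ : β < τp := EReal.coe_lt_coe_iff.1 (hβ.trans_le (legendre_le b))
  exact coe_le_legendre (by nlinarith) (hΔ.smul_add_smul_mem hατ.le hβτ.le ht0.le ht1.le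
    (hΔ.mem_of_coe_lt_legendre hα) (hΔ.mem_of_coe_lt_legendre hβ))

theorem bot_lt_legendre (hΔ : IsOkounkovTestCurve Δlim Δ τp) (hb : Bornology.IsBounded Δlim)
    {a : EuclideanSpace ℝ (Fin n)} (ha : a ∈ interior Δlim) : ⊥ < legendre Δ τp a := by
  obtain ⟨τ, haτ, hτ⟩ := ((eventually_mem_of_mem_interior
    ((eventually_le_atBot τp).mono hΔ.body) hb hΔ.tendsto ha).and (eventually_lt_atBot τp)).exists
  exact (EReal.bot_lt_coe τ).trans_le (coe_le_legendre hτ haτ)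

end IsOkounkovTestCurve

end Legendre

theorem stmt13_general {n : ℕ} (Δlim : Set (EuclideanSpace ℝ (Fin n))) (τp : ℝ)
    (Δ : ℝ → Set (EuclideanSpace ℝ (Fin n)))
    (hΔne : Δlim.Nonempty) (hΔc : IsCompact Δlim)
    (hbody : ∀ τ ≤ τp, (Δ τ).Nonempty ∧ IsCompact (Δ τ) ∧ Convex ℝ (Δ τ))
    (hdec : ∀ σ τ : ℝ, σ ≤ τ → τ ≤ τp → Δ τ ⊆ Δ σ)
    (hlim : Tendsto (fun τ => hausdorffDist (Δ τ) Δlim) atBot (nhds 0))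
    (hconc : ∀ τ ≤ τp, ∀ τ' ≤ τp, ∀ t : ℝ, 0 ≤ t → t ≤ 1 →
        t • Δ τ + (1 - t) • Δ τ' ⊆ Δ (t * τ + (1 - t) * τ'))
    (htp : Δ τp = ⋂ (τ : ℝ) (_ : τ < τp), Δ τ) :
    (∀ a ∈ Δlim, ∀ b ∈ Δlim, ∀ t : ℝ, 0 ≤ t → t ≤ 1 →
        (t : EReal) * legendre Δ τp a + ((1 - t : ℝ) : EReal) * legendre Δ τp b
          ≤ legendre Δ τp (t • a + (1 - t) • b)) ∧
    (∀ a ∈ interior Δlim, ⊥ < legendre Δ τp a) ∧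
    UpperSemicontinuousOn (legendre Δ τp) Δlim ∧
    (∀ τ : ℝ, τ ≤ τp → {a ∈ Δlim | (τ : EReal) ≤ legendre Δ τp a} = Δ τ) := by
  have hΔ : IsOkounkovTestCurve Δlim Δ τp := ⟨hbody, hdec, hlim, hconc, htp⟩
  exact ⟨fun a _ b _ _ ht0 ht1 => hΔ.legendre_smul_add_smul a b ht0 ht1,
    fun _ ha => hΔ.bot_lt_legendre hΔc.isBounded ha,
    hΔ.upperSemicontinuousOn_legendre hΔne hΔc,
    fun _ hτ => hΔ.sep_coe_le_legendre_eq hΔne hΔc hτ⟩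

theorem stmt13 {n : ℕ} (Δlim : Set (EuclideanSpace ℝ (Fin n))) (τp : ℝ)
    (Δ : ℝ → Set (EuclideanSpace ℝ (Fin n)))
    (hΔne : Δlim.Nonempty) (hΔc : IsCompact Δlim) (hΔconv : Convex ℝ Δlim)
    (hΔvol : 0 < volume Δlim)
    (hbody : ∀ τ ≤ τp, (Δ τ).Nonempty ∧ IsCompact (Δ τ) ∧ Convex ℝ (Δ τ))
    (hdec : ∀ σ τ : ℝ, σ ≤ τ → τ ≤ τp → Δ τ ⊆ Δ σ)
    (hlim : Tendsto (fun τ => hausdorffDist (Δ τ) Δlim) atBot (nhds 0))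
    (hconc : ∀ τ ≤ τp, ∀ τ' ≤ τp, ∀ t : ℝ, 0 ≤ t → t ≤ 1 →
        t • Δ τ + (1 - t) • Δ τ' ⊆ Δ (t * τ + (1 - t) * τ'))
    (htp : Δ τp = ⋂ (τ : ℝ) (_ : τ < τp), Δ τ) :
    (∀ a ∈ Δlim, ∀ b ∈ Δlim, ∀ t : ℝ, 0 ≤ t → t ≤ 1 →
        (t : EReal) * legendre Δ τp a + ((1 - t : ℝ) : EReal) * legendre Δ τp b
          ≤ legendre Δ τp (t • a + (1 - t) • b)) ∧
    (∀ a ∈ interior Δlim, ⊥ < legendre Δ τp a) ∧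
    UpperSemicontinuousOn (legendre Δ τp) Δlim ∧
    (∀ τ : ℝ, τ ≤ τp → {a ∈ Δlim | (τ : EReal) ≤ legendre Δ τp a} = Δ τ) :=
  stmt13_general Δlim τp Δ hΔne hΔc hbody hdec hlim hconc htp
end
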